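/- Define b(n,k) := Σ_{j=0}^{min(n,k)} j! · (j+1)! · S(n+1, j+1) · S(k+1, j+1). Then for all integers n, k ≥ 0, Σ_{ℓ=0}^{n} c(n+1, ℓ+1) · b(ℓ, k) = n! · (n+1)^{k+1}. -/

import Mathlib

/-!
The inner sum `∑ l, c(n+1, l+1) S(l+1, j+1)` is the Lah number `L(n+1, j+1)`, which satisfies
`L(n+1, k+1) = (n+k+1) L(n, k+1) + L(n, k)` and hence equals `C(n, j) (n+1)! / (j+1)!`.
So `j! (j+1)! L(n+1, j+1) = n! (n+1)(n)⋯(n+1-j)`, and expanding the power `(n+1)^{k+1}` in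
falling factorials with Stirling numbers of the second kind gives the identity.
-/

open Finset

/-- Stirling numbers of the second kind. -/
def stirling2 : ℕ → ℕ → ℕ
  | 0, 0 => 1
  | 0, _ + 1 => 0
  | _ + 1, 0 => 0
  | n + 1, k + 1 => (k + 1) * stirling2 n (k + 1) + stirling2 n k

/-- Unsigned Stirling numbers of the first kind. -/
def stirling1 : ℕ → ℕ → ℕ
  | 0, 0 => 1
  | 0, _ + 1 => 0
  | _ + 1, 0 => 0
  | n + 1, k + 1 => n * stirling1 n (k + 1) + stirling1 n k

/-- The normalized symmetrized poly-Bernoulli number evaluated at 1. -/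
def bNum (n k : ℕ) : ℕ :=
  ∑ j ∈ Finset.range (min n k + 1),
    j.factorial * (j + 1).factorial * stirling2 (n + 1) (j + 1) * stirling2 (k + 1) (j + 1)

open Nat

theorem stirling1_eq_stirlingFirst : stirling1 = stirlingFirst := by
  funext n k
  induction n generalizing k <;> cases k <;> simp_all [stirling1, stirlingFirst_succ_succ]

theorem stirling2_eq_stirlingSecond : stirling2 = stirlingSecond := by
  funext n k
  induction n generalizing k <;> cases k <;> simp_all [stirling2, stirlingSecond_succ_succ]

namespace Nat

theorem mul_descFactorial (x i : ℕ) :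
    x * x.descFactorial i = x.descFactorial (i + 1) + i * x.descFactorial i := by
  rcases le_or_gt i x with h | h
  · rw [descFactorial_succ, ← add_mul, Nat.sub_add_cancel h]
  · simp [descFactorial_eq_zero_iff_lt.mpr h]

theorem sum_stirlingSecond_mul_descFactorial (m x : ℕ) :
    ∑ i ∈ range (m + 1), stirlingSecond m i * x.descFactorial i = x ^ m := by
  induction m with
  | zero => simp
  | succ m ih =>
    have hshift :
        ∑ i ∈ range (m + 1), (i + 1) * stirlingSecond m (i + 1) * x.descFactorial (i + 1)
          = ∑ i ∈ range (m + 1), i * stirlingSecond m i * x.descFactorial i := by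
      have h := sum_range_succ' (fun i => i * stirlingSecond m i * x.descFactorial i) (m + 1)
      rw [sum_range_succ, stirlingSecond_eq_zero_of_lt (lt_succ_self m)] at h
      simpa using h.symm
    calc ∑ i ∈ range (m + 2), stirlingSecond (m + 1) i * x.descFactorial i
        = ∑ i ∈ range (m + 1), ((i + 1) * stirlingSecond m (i + 1) * x.descFactorial (i + 1)
            + stirlingSecond m i * x.descFactorial (i + 1)) := by
          simp [sum_range_succ' _ (m + 1), stirlingSecond_succ_succ, add_mul]
      _ = ∑ i ∈ range (m + 1), stirlingSecond m i * (x * x.descFactorial i) := by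
          rw [sum_add_distrib, hshift, ← sum_add_distrib]
          refine sum_congr rfl fun i _ => ?_
          rw [mul_descFactorial]
          ring
      _ = x ^ (m + 1) := by
          rw [pow_succ, ← ih, sum_mul]
          exact sum_congr rfl fun i _ => by ring

theorem sum_stirlingSecond_succ_mul_descFactorial_succ (m x : ℕ) :
    ∑ j ∈ range (m + 1), stirlingSecond (m + 1) (j + 1) * x.descFactorial (j + 1) =
      x ^ (m + 1) := by
  rw [← sum_stirlingSecond_mul_descFactorial, sum_range_succ' _ (m + 1)]
  simp

def lah (n k : ℕ) : ℕ := ∑ l ∈ range (n + 1), stirlingFirst n l * stirlingSecond l k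

theorem lah_eq_sum_range {n N : ℕ} (h : n < N) (k : ℕ) :
    lah n k = ∑ l ∈ range N, stirlingFirst n l * stirlingSecond l k := by
  refine sum_subset (range_subset_range.mpr h) fun l _ hl => ?_
  rw [stirlingFirst_eq_zero_of_lt (by simpa using hl), zero_mul]

theorem lah_succ_succ_eq_sum (n k : ℕ) :
    lah (n + 1) (k + 1) =
      ∑ l ∈ range (n + 1), stirlingFirst (n + 1) (l + 1) * stirlingSecond (l + 1) (k + 1) := by
  simp [lah, sum_range_succ' _ (n + 1)]

theorem lah_succ_zero (n : ℕ) : lah (n + 1) 0 = 0 := by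
  simp [lah, sum_range_succ']

theorem lah_succ_succ (n k : ℕ) :
    lah (n + 1) (k + 1) = (n + k + 1) * lah n (k + 1) + lah n k := by
  have hfirst : ∑ l ∈ range (n + 1), stirlingFirst n (l + 1) * stirlingSecond (l + 1) (k + 1)
      = lah n (k + 1) := by
    simp [lah_eq_sum_range (show n < n + 2 by omega), sum_range_succ' _ (n + 1)]
  have hsecond : ∑ l ∈ range (n + 1), stirlingFirst n l * stirlingSecond (l + 1) (k + 1)
      = (k + 1) * lah n (k + 1) + lah n k := by
    simp only [lah, stirlingSecond_succ_succ, mul_add, sum_add_distrib, mul_sum, mul_left_comm]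
  calc lah (n + 1) (k + 1)
      = ∑ l ∈ range (n + 1), (n * (stirlingFirst n (l + 1) * stirlingSecond (l + 1) (k + 1))
          + stirlingFirst n l * stirlingSecond (l + 1) (k + 1)) := by
        rw [lah, sum_range_succ']
        simp only [stirlingFirst_succ_succ, stirlingFirst_succ_zero, zero_mul, add_zero, add_mul,
          mul_assoc]
    _ = (n + k + 1) * lah n (k + 1) + lah n k := by
        rw [sum_add_distrib, ← mul_sum, hfirst, hsecond]
        ring

theorem factorial_mul_lah_succ_succ (n k : ℕ) :
    (k + 1)! * lah (n + 1) (k + 1) = n.choose k * (n + 1)! := by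
  induction n generalizing k with
  | zero =>
    cases k <;> simp [lah, sum_range_succ, stirlingFirst_self, stirlingSecond_self,
      stirlingSecond_eq_zero_of_lt]
  | succ n ih =>
    cases k with
    | zero =>
      have h := ih 0
      simp only [zero_add, factorial_one, one_mul, choose_zero_right] at h ⊢
      rw [lah_succ_succ, lah_succ_zero, h, factorial_succ (n + 1)]
      ring
    | succ k =>
      have hchoose : (n + k + 3) * n.choose (k + 1) + (k + 2) * n.choose k
          = (n + 2) * (n + 1).choose (k + 1) := by
        rw [choose_succ_succ]
        rcases le_or_gt k n with hkn | hnk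
        · obtain ⟨d, rfl⟩ := exists_add_of_le hkn
          have := choose_succ_right_eq (k + d) k
          rw [Nat.add_sub_cancel_left] at this
          linarith
        · simp [choose_eq_zero_of_lt hnk, choose_eq_zero_of_lt (show n < k + 1 by omega)]
      calc (k + 2)! * lah (n + 2) (k + 2)
          = (n + k + 3) * ((k + 2)! * lah (n + 1) (k + 2))
            + (k + 2) * ((k + 1)! * lah (n + 1) (k + 1)) := by
            rw [lah_succ_succ, factorial_succ (k + 1)]
            ring
        _ = (n + 1).choose (k + 1) * (n + 2)! := by
            rw [ih, ih, factorial_succ (n + 1)]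
            linear_combination (n + 1)! * hchoose

theorem factorial_mul_factorial_mul_lah (n j : ℕ) :
    j ! * (j + 1)! * lah (n + 1) (j + 1) = n ! * (n + 1).descFactorial (j + 1) := by
  rw [mul_assoc, factorial_mul_lah_succ_succ, succ_descFactorial_succ,
    descFactorial_eq_factorial_mul_choose, factorial_succ]
  ring

end Nat

theorem bNum_eq_sum_range (l k : ℕ) :
    bNum l k = ∑ j ∈ range (k + 1),
      j ! * (j + 1)! * stirlingSecond (l + 1) (j + 1) * stirlingSecond (k + 1) (j + 1) := by
  rw [bNum, stirling2_eq_stirlingSecond]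
  refine sum_subset (range_subset_range.mpr (by omega)) fun j hjk hjl => ?_
  simp only [mem_range] at hjk hjl
  rw [stirlingSecond_eq_zero_of_lt (show l + 1 < j + 1 by omega), mul_zero, zero_mul]

theorem stmt10 (n k : ℕ) :
    ∑ l ∈ Finset.range (n + 1), stirling1 (n + 1) (l + 1) * bNum l k =
      n.factorial * (n + 1) ^ (k + 1) := by
  calc ∑ l ∈ range (n + 1), stirling1 (n + 1) (l + 1) * bNum l k
      = ∑ j ∈ range (k + 1),
          stirlingSecond (k + 1) (j + 1) * (j ! * (j + 1)! * lah (n + 1) (j + 1)) := by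
        simp only [stirling1_eq_stirlingFirst, bNum_eq_sum_range, lah_succ_succ_eq_sum, mul_sum]
        rw [sum_comm]
        exact sum_congr rfl fun j _ => sum_congr rfl fun l _ => by ring
    _ = n ! * (n + 1) ^ (k + 1) := by
        simp only [factorial_mul_factorial_mul_lah,
          ← sum_stirlingSecond_succ_mul_descFactorial_succ, mul_sum]
        exact sum_congr rfl fun j _ => by ring
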